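/- The following conditions are equivalent: (A1) ω ⊆ Λ; (A2) ωΛ = Λ; (A3) ω:Λ = R:Λ; (A4) I^n = I^n ω ∩ R for all n ≥ ν; (A5) ωI^n = I^n for all n ≥ ν; (A6) there exists n > 0 with ωI^n = I^n. -/

import Mathlib

open Submodule IsLocalRing

noncomputable section

/-- Length of an `R`-module, defined as the Krull dimension of its submodule lattice. -/
def modLength (R : Type*) [Ring R] (M : Type*) [AddCommGroup M] [Module R M] : WithBot ℕ∞ :=
  Order.krullDim (Submodule R M)

/-- Length of the quotient `I / J` for submodules `J ≤ I` of an ambient module. -/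
def qlen (R : Type*) [CommRing R] {K : Type*} [AddCommGroup K] [Module R K]
    (I J : Submodule R K) : WithBot ℕ∞ :=
  modLength R (I ⧸ (J.comap I.subtype))

/-- The image of an ideal of `R` in `K`, viewed as an `R`-submodule of `K`. -/
def idl (R : Type*) [CommRing R] (K : Type*) [CommRing K] [Algebra R K] (I : Ideal R) :
    Submodule R K :=
  Submodule.map (Algebra.linearMap R K) I

/-- The blowing-up `Λ(I) = ⋃ₙ (Iⁿ : Iⁿ)` of `R` along `I`, inside `K`. -/
def blowup (R : Type*) [CommRing R] (K : Type*) [CommRing K] [Algebra R K] (I : Ideal R) :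
    Submodule R K :=
  ⨆ n : ℕ, (idl R K I ^ n) / (idl R K I ^ n)

/-- The set of values of the nonzero elements of a fractional ideal. -/
def vvals {R : Type*} [CommRing R] {K : Type*} [CommRing K] [Algebra R K]
    (v : K → WithTop ℤ) (J : Submodule R K) : Set (WithTop ℤ) :=
  v '' {y | y ∈ J ∧ y ≠ 0}

/-! Since `x` is a reduction of `I` with reduction number `ν`, `Iᵐ = x^(m-ν) I^ν` for `m ≥ ν`,
so the rings `Iᵐ : Iᵐ` increase and stabilise at `Λ = I^ν : I^ν`. Hence `ω ⊆ Λ` iff `ωIᵐ = Iᵐ` for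
`m ≥ ν` (A5, A6) and, `Λ` being a ring containing `R`, iff `ωΛ = Λ` (A2). The duality
`ω : (ω : N) = N` together with `R : N = ω : ωN` turns `ωΛ = Λ` into `ω : Λ = R : Λ` (A3).
For (A4) ⇒ (A1), duality turns `Iᵐ = Iᵐω ∩ R` into `ω : Iᵐ = (R : Iᵐ) + ω`; for `m = ν + 1`
this gives `ω ⊆ (R : I^ν) + xω`, so Nakayama yields `ωI^ν ⊆ R`, whence
`ωI^ν ⊆ I^νω ∩ R = I^ν`. -/

theorem le_iff_mul_eq_of_one_le {M : Type*} [CommMonoid M] [PartialOrder M] [MulLeftMono M]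
    {a b : M} (ha : 1 ≤ a) (hb : 1 ≤ b) (hbb : b * b ≤ b) : a ≤ b ↔ a * b = b := by
  refine ⟨fun h ↦ le_antisymm ?_ ?_, fun h ↦ ?_⟩
  · calc a * b = b * a := mul_comm a b
      _ ≤ b * b := mul_le_mul_right h b
      _ ≤ b := hbb
  · simpa [mul_comm] using mul_le_mul_right ha b
  · simpa [h] using mul_le_mul_right hb a

namespace Submodule

section ColonModules

variable {R : Type*} [CommRing R] {A : Type*} [CommRing A] [Algebra R A]

theorem div_mul_le (B C : Submodule R A) : B / C * C ≤ B :=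
  le_div_iff_mul_le.mp le_rfl

theorem div_mul_eq_div_div (B C D : Submodule R A) : B / (C * D) = B / C / D :=
  le_antisymm
    (by rw [le_div_iff_mul_le, le_div_iff_mul_le, mul_assoc, mul_comm D]; exact div_mul_le _ _)
    (by rw [le_div_iff_mul_le, mul_comm C, ← mul_assoc]
        exact (mul_le_mul_left (div_mul_le _ _) _).trans (div_mul_le _ _))

theorem div_sup_eq_inf (B C D : Submodule R A) : B / (C ⊔ D) = B / C ⊓ B / D := by
  refine le_antisymm (le_inf ?_ ?_) ?_ <;> rw [le_div_iff_mul_le]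
  · exact (mul_le_mul_right le_sup_left _).trans (div_mul_le _ _)
  · exact (mul_le_mul_right le_sup_right _).trans (div_mul_le _ _)
  · rw [mul_sup]
    exact sup_le ((mul_le_mul_left inf_le_left _).trans (div_mul_le _ _))
      ((mul_le_mul_left inf_le_right _).trans (div_mul_le _ _))

theorem one_le_div_self (N : Submodule R A) : 1 ≤ N / N := by
  rw [le_div_iff_mul_le, one_mul]

theorem div_self_mul_self (N : Submodule R A) : N / N * N = N :=
  le_antisymm (div_mul_le N N) (by simpa using mul_le_mul_left (one_le_div_self N) N)

theorem div_self_mul_div_self_le (N : Submodule R A) : N / N * (N / N) ≤ N / N := by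
  rw [le_div_iff_mul_le, mul_assoc, div_self_mul_self, div_self_mul_self]

theorem le_div_self_iff_mul_eq {M N : Submodule R A} (hM : 1 ≤ M) : M ≤ N / N ↔ M * N = N :=
  ⟨fun h ↦ le_antisymm (le_div_iff_mul_le.mp h) (by simpa using mul_le_mul_left hM N),
    fun h ↦ le_div_iff_mul_le.mpr h.le⟩

theorem div_self_le_mul_div_mul (M N : Submodule R A) : N / N ≤ M * N / (M * N) := by
  rw [le_div_iff_mul_le, mul_left_comm]
  exact mul_le_mul_right (div_mul_le N N) M

theorem monotone_pow_div_pow (N : Submodule R A) : Monotone fun n : ℕ ↦ N ^ n / N ^ n :=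
  monotone_nat_of_le_succ fun n ↦ by
    simpa only [pow_succ'] using div_self_le_mul_div_mul N (N ^ n)

theorem fg_one : (1 : Submodule R A).FG :=
  one_eq_span (R := R) (A := A) ▸ fg_span_singleton 1

theorem ne_bot_of_one_le [Nontrivial A] {N : Submodule R A} (h : 1 ≤ N) : N ≠ ⊥ :=
  fun hN ↦ one_ne_zero ((mem_bot R).mp (hN ▸ one_le.mp h))

theorem span_algebraMap_mul_eq_smul (x : R) (N : Submodule R A) :
    span R {algebraMap R A x} * N = Ideal.span {x} • N := by
  rw [ideal_span_singleton_smul, span_singleton_mul]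
  ext y
  simp [mem_smul_pointwise_iff_exists, Algebra.smul_def]

end ColonModules

section FractionalIdeals

variable {R : Type*} [CommRing R] {K : Type*} [Field K] [Algebra R K]

theorem span_singleton_mul_le_span_singleton_mul_iff {c : K} (hc : c ≠ 0)
    {M N : Submodule R K} : span R {c} * M ≤ span R {c} * N ↔ M ≤ N := by
  refine ⟨fun h ↦ ?_, fun h ↦ mul_le_mul_right h _⟩
  simpa [← mul_assoc, span_mul_span, inv_mul_cancel₀ hc, ← one_eq_span] using
    mul_le_mul_right h (span R {c⁻¹})

theorem span_singleton_mul_div_self {c : K} (hc : c ≠ 0) (N : Submodule R K) :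
    span R {c} * N / (span R {c} * N) = N / N := by
  refine le_antisymm ?_ (div_self_le_mul_div_mul _ _)
  rw [le_div_iff_mul_le, ← span_singleton_mul_le_span_singleton_mul_iff hc, mul_left_comm]
  exact div_mul_le _ _

theorem div_le_span_inv_mul {c : K} (hc : c ≠ 0) {N : Submodule R K} (hcN : c ∈ N)
    (B : Submodule R K) : B / N ≤ span R {c⁻¹} * B := fun y hy ↦
  mem_span_singleton_mul.mpr ⟨y * c, hy c hcN, by field_simp⟩

theorem fg_div_of_mem [IsNoetherianRing R] {c : K} (hc : c ≠ 0) {N : Submodule R K}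
    (hcN : c ∈ N) {B : Submodule R K} (hB : B.FG) : (B / N).FG :=
  ((fg_span_singleton _).mul hB).of_le (div_le_span_inv_mul hc hcN B)

end FractionalIdeals

end Submodule

section Reduction

variable {R : Type*} [CommRing R] {K : Type*} [Field K] [Algebra R K]
  {J : Submodule R K} {c : K} {ν : ℕ} (hred : ∀ m ≥ ν, J ^ (m + 1) = span R {c} * J ^ m)
include hred

theorem pow_add_eq_span_pow_mul (k : ℕ) : J ^ (ν + k) = span R {c ^ k} * J ^ ν := by
  induction k with
  | zero => rw [Nat.add_zero, pow_zero, ← one_eq_span, one_mul]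
  | succ k ih =>
    rw [← Nat.add_assoc, hred _ (Nat.le_add_right ν k), ih, ← mul_assoc, span_mul_span,
      Set.singleton_mul_singleton, pow_succ']

variable (hc : c ≠ 0)
include hc

theorem pow_div_pow_eq_of_le {m : ℕ} (hm : ν ≤ m) : J ^ m / J ^ m = J ^ ν / J ^ ν := by
  obtain ⟨k, rfl⟩ := Nat.exists_eq_add_of_le hm
  rw [pow_add_eq_span_pow_mul hred, span_singleton_mul_div_self (pow_ne_zero k hc)]

theorem iSup_pow_div_pow_eq : ⨆ n, J ^ n / J ^ n = J ^ ν / J ^ ν :=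
  le_antisymm
    (iSup_le fun n ↦ (le_total n ν).elim (fun h ↦ monotone_pow_div_pow J h)
      fun h ↦ (pow_div_pow_eq_of_le hred hc h).le)
    (le_iSup (fun n ↦ J ^ n / J ^ n) ν)

theorem le_pow_div_pow_iff_forall_mul_pow_eq {ω : Submodule R K} (hω : 1 ≤ ω) :
    ω ≤ J ^ ν / J ^ ν ↔ ∀ m ≥ ν, ω * J ^ m = J ^ m :=
  ⟨fun h _ hm ↦ (le_div_self_iff_mul_eq hω).mp (pow_div_pow_eq_of_le hred hc hm ▸ h),
    fun h ↦ (le_div_self_iff_mul_eq hω).mpr (h ν le_rfl)⟩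

theorem le_pow_div_pow_iff_exists_mul_pow_eq {ω : Submodule R K} (hω : 1 ≤ ω) :
    ω ≤ J ^ ν / J ^ ν ↔ ∃ m, 0 < m ∧ ω * J ^ m = J ^ m := by
  refine ⟨fun h ↦ ⟨ν + 1, ν.succ_pos, ?_⟩, fun ⟨m, _, hm⟩ ↦ ?_⟩
  · exact (le_pow_div_pow_iff_forall_mul_pow_eq hred hc hω).mp h _ ν.le_succ
  · rw [← iSup_pow_div_pow_eq hred hc]
    exact ((le_div_self_iff_mul_eq hω).mpr hm).trans (le_iSup (fun n ↦ J ^ n / J ^ n) m)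

end Reduction

section CanonicalModule

variable {R : Type*} [CommRing R] {K : Type*} [Field K] [Algebra R K] {ω : Submodule R K}

theorem one_div_eq_div_mul (hωω : ω / ω = 1) (N : Submodule R K) : 1 / N = ω / (ω * N) := by
  rw [Submodule.div_mul_eq_div_div, hωω]

variable (hωω : ω / ω = 1) (hdual : ∀ N : Submodule R K, N ≠ ⊥ → N.FG → ω / (ω / N) = N)
  (hω0 : ω ≠ ⊥) (hωfg : ω.FG)
include hωω hdual hω0 hωfg

theorem div_eq_one_div_iff_mul_eq {N : Submodule R K} (hN : N ≠ ⊥) (hNfg : N.FG) :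
    ω / N = 1 / N ↔ ω * N = N := by
  have hωN : ω * N ≠ ⊥ := mul_eq_bot.not.mpr (not_or.mpr ⟨hω0, hN⟩)
  refine ⟨fun h ↦ ?_, fun h ↦ by rw [one_div_eq_div_mul hωω, h]⟩
  calc ω * N = ω / (ω / (ω * N)) := (hdual _ hωN (hωfg.mul hNfg)).symm
    _ = ω / (ω / N) := by rw [← one_div_eq_div_mul hωω, h]
    _ = N := hdual N hN hNfg

theorem div_eq_one_div_sup_of_eq_mul_inf_one {N : Submodule R K} (hN : N ≠ ⊥) (hNfg : N.FG)
    (hNdivfg : (1 / N).FG) (h : N = N * ω ⊓ 1) : ω / N = 1 / N ⊔ ω := by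
  have hdiv_one_div : ω / (1 / N) = ω * N := by
    rw [one_div_eq_div_mul hωω, hdual _ (mul_eq_bot.not.mpr (not_or.mpr ⟨hω0, hN⟩))
      (hωfg.mul hNfg)]
  have hdiv_sup : ω / (1 / N ⊔ ω) = N := by
    rw [Submodule.div_sup_eq_inf, hdiv_one_div, hωω, mul_comm, ← h]
  calc ω / N = ω / (ω / (1 / N ⊔ ω)) := by rw [hdiv_sup]
    _ = 1 / N ⊔ ω := hdual _ (ne_bot_of_le_ne_bot hω0 le_sup_right) (hNdivfg.sup hωfg)

end CanonicalModule

section Nakayama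

variable {R : Type*} [CommRing R] [IsLocalRing R] {K : Type*} [Field K] [Algebra R K]

theorem le_one_div_of_div_eq_one_div_sup {x : R} (hx : x ∈ maximalIdeal R)
    (hx0 : algebraMap R K x ≠ 0) {ω N : Submodule R K} (hωfg : ω.FG) (hN : N ≤ 1)
    (h : ω / (span R {algebraMap R K x} * N) = 1 / (span R {algebraMap R K x} * N) ⊔ ω) :
    ω ≤ 1 / N := by
  set c := algebraMap R K x
  have hinv : span R {c⁻¹} * ω ≤ ω / (span R {c} * N) := by
    rw [Submodule.le_div_iff_mul_le, mul_mul_mul_comm, span_mul_span,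
      Set.singleton_mul_singleton, inv_mul_cancel₀ hx0, ← one_eq_span, one_mul]
    simpa using mul_le_mul_right hN ω
  have hshift : span R {c} * (1 / (span R {c} * N)) ≤ 1 / N := by
    rw [Submodule.le_div_iff_mul_le, mul_assoc, mul_left_comm]
    exact div_mul_le _ _
  have hle : ω ≤ 1 / N ⊔ Ideal.span {x} • ω :=
    calc ω = span R {c} * (span R {c⁻¹} * ω) := by
          rw [← mul_assoc, span_mul_span, Set.singleton_mul_singleton, mul_inv_cancel₀ hx0,
            ← one_eq_span, one_mul]
      _ ≤ span R {c} * (1 / (span R {c} * N) ⊔ ω) := mul_le_mul_right (h ▸ hinv) _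
      _ ≤ 1 / N ⊔ Ideal.span {x} • ω := by
          rw [Submodule.mul_sup]
          exact sup_le_sup hshift (span_algebraMap_mul_eq_smul x ω).le
  exact le_of_le_smul_of_le_jacobson_bot hωfg
    (((Ideal.span_singleton_le_iff_mem _).mpr hx).trans (maximalIdeal_le_jacobson ⊥)) hle

theorem le_pow_div_pow_of_forall_pow_eq_pow_mul_inf_one [IsNoetherianRing R]
    {x : R} (hx : x ∈ maximalIdeal R) (hx0 : algebraMap R K x ≠ 0) {J : Submodule R K}
    (hxJ : algebraMap R K x ∈ J) (hJ1 : J ≤ 1) (hJfg : J.FG) {ν : ℕ}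
    (hred : ∀ m ≥ ν, J ^ (m + 1) = span R {algebraMap R K x} * J ^ m) {ω : Submodule R K}
    (hωω : ω / ω = 1) (hdual : ∀ N : Submodule R K, N ≠ ⊥ → N.FG → ω / (ω / N) = N)
    (hω0 : ω ≠ ⊥) (hωfg : ω.FG) (h : ∀ m ≥ ν, J ^ m = J ^ m * ω ⊓ 1) :
    ω ≤ J ^ ν / J ^ ν := by
  have hxpow (n : ℕ) : algebraMap R K x ^ n ∈ J ^ n := pow_mem_pow J hxJ n
  have hJpow (n : ℕ) : J ^ n ≠ ⊥ := fun hb ↦ pow_ne_zero n hx0 ((mem_bot R).mp (hb ▸ hxpow n))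
  have hdiv := div_eq_one_div_sup_of_eq_mul_inf_one hωω hdual hω0 hωfg (hJpow (ν + 1))
    (hJfg.pow _) (fg_div_of_mem (pow_ne_zero _ hx0) (hxpow _) fg_one) (h _ ν.le_succ)
  rw [hred ν le_rfl] at hdiv
  have hωJ : ω * J ^ ν ≤ 1 := Submodule.le_div_iff_mul_le.mp
    (le_one_div_of_div_eq_one_div_sup hx hx0 hωfg (pow_le_one' hJ1 ν) hdiv)
  rw [Submodule.le_div_iff_mul_le]
  calc ω * J ^ ν ≤ J ^ ν * ω ⊓ 1 := le_inf (mul_comm ω _).le hωJ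
    _ = J ^ ν := (h ν le_rfl).symm

end Nakayama

section IdealsInFractionField

variable {R : Type*} [CommRing R] {K : Type*} [Field K] [Algebra R K]

theorem idl_mul (I J : Ideal R) : idl R K (I * J) = idl R K I * idl R K J :=
  IsLocalization.coeSubmodule_mul K I J

theorem idl_pow (I : Ideal R) (n : ℕ) : idl R K (I ^ n) = idl R K I ^ n :=
  Submodule.map_pow I (Algebra.ofId R K) n

theorem idl_span_singleton (x : R) : idl R K (Ideal.span {x}) = span R {algebraMap R K x} :=
  IsLocalization.coeSubmodule_span_singleton K x

theorem idl_le_one (I : Ideal R) : idl R K I ≤ 1 :=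
  (IsLocalization.coeSubmodule_mono K le_top).trans (IsLocalization.coeSubmodule_top K).le

theorem idl_fg [IsNoetherianRing R] (I : Ideal R) : (idl R K I).FG :=
  (IsNoetherian.noetherian I).map _

theorem idl_pow_succ_eq_span_mul {I : Ideal R} {x : R} {m : ℕ}
    (h : I ^ (m + 1) = Ideal.span {x} * I ^ m) :
    idl R K I ^ (m + 1) = span R {algebraMap R K x} * idl R K I ^ m := by
  rw [← idl_pow, h, idl_mul, idl_span_singleton, idl_pow]

end IdealsInFractionField

theorem ne_zero_of_pow_succ_eq_span_mul {R : Type*} [CommRing R] [IsDomain R] {I : Ideal R}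
    (hI : I ≠ ⊥) {x : R} {n : ℕ} (h : I ^ (n + 1) = Ideal.span {x} * I ^ n) : x ≠ 0 := by
  rintro rfl
  rw [Ideal.span_singleton_eq_bot.mpr rfl, bot_mul] at h
  exact hI (pow_eq_zero_iff n.succ_ne_zero |>.mp h)

theorem stmt_7_general
    (R : Type*) [CommRing R] [IsDomain R] [IsLocalRing R] [IsNoetherianRing R]
    (K : Type*) [Field K] [Algebra R K] [IsFractionRing R K]
    [Module.Finite R (integralClosure R K)]
    (I : Ideal R) (hI0 : I ≠ ⊥) (hIrad : I.radical = maximalIdeal R)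
    (x : R) (hxI : x ∈ I)
    (ν : ℕ) (hν : IsLeast {n : ℕ | ∀ k ≥ n, I ^ (k + 1) = Ideal.span {x} * I ^ k} ν)
    (ω : Submodule R K) (hω1 : 1 ≤ ω) (hω2 : ω < ((integralClosure R K).toSubmodule))
    (hωω : ω / ω = 1)
    (hωdual : ∀ J : Submodule R K, J ≠ ⊥ → J.FG → ω / (ω / J) = J) :
    ((ω ≤ (blowup R K I)) ↔ ω * (blowup R K I) = (blowup R K I)) ∧
    ((ω ≤ (blowup R K I)) ↔ ω / (blowup R K I) = (1 : Submodule R K) / (blowup R K I)) ∧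
    ((ω ≤ (blowup R K I)) ↔ ∀ m ≥ ν, (idl R K I) ^ m = ((idl R K I) ^ m * ω) ⊓ 1) ∧
    ((ω ≤ (blowup R K I)) ↔ ∀ m ≥ ν, ω * (idl R K I) ^ m = (idl R K I) ^ m) ∧
    ((ω ≤ (blowup R K I)) ↔ ∃ m : ℕ, 0 < m ∧ ω * (idl R K I) ^ m = (idl R K I) ^ m) := by
  set J := idl R K I
  have hred (m : ℕ) (hm : m ≥ ν) : J ^ (m + 1) = span R {algebraMap R K x} * J ^ m :=
    idl_pow_succ_eq_span_mul (hν.1 m hm)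
  have hx0 : algebraMap R K x ≠ 0 := (map_ne_zero_iff _ (IsFractionRing.injective R K)).mpr
    (ne_zero_of_pow_succ_eq_span_mul hI0 (hν.1 ν le_rfl))
  have hxJ : algebraMap R K x ∈ J := ⟨x, hxI, rfl⟩
  have hωfg : ω.FG := (Module.Finite.iff_fg.mp inferInstance).of_le hω2.le
  have hΛfg : (J ^ ν / J ^ ν).FG :=
    fg_div_of_mem (pow_ne_zero ν hx0) (pow_mem_pow J hxJ ν) ((idl_fg I).pow ν)
  have hA2 : ω ≤ J ^ ν / J ^ ν ↔ ω * (J ^ ν / J ^ ν) = J ^ ν / J ^ ν :=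
    le_iff_mul_eq_of_one_le hω1 (one_le_div_self _) (div_self_mul_div_self_le _)
  have hA5 := le_pow_div_pow_iff_forall_mul_pow_eq hred hx0 hω1
  rw [show blowup R K I = J ^ ν / J ^ ν from iSup_pow_div_pow_eq hred hx0]
  refine ⟨hA2, ?_, ⟨fun h m hm ↦ ?_, ?_⟩, hA5, le_pow_div_pow_iff_exists_mul_pow_eq hred hx0 hω1⟩
  · rw [hA2, div_eq_one_div_iff_mul_eq hωω hωdual (ne_bot_of_one_le hω1) hωfg
      (ne_bot_of_one_le (one_le_div_self _)) hΛfg]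
  · rw [mul_comm, hA5.mp h m hm, inf_eq_left.mpr (pow_le_one' (idl_le_one I) m)]
  · exact le_pow_div_pow_of_forall_pow_eq_pow_mul_inf_one (hIrad ▸ Ideal.le_radical hxI) hx0
      hxJ (idl_le_one I) (idl_fg I) hred hωω hωdual (ne_bot_of_one_le hω1) hωfg

theorem stmt_7
    (R : Type*) [CommRing R] [IsDomain R] [IsLocalRing R] [IsNoetherianRing R]
    (K : Type*) [Field K] [Algebra R K] [IsFractionRing R K]
    [IsDiscreteValuationRing (integralClosure R K)]
    [Module.Finite R (integralClosure R K)]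
    (hres : ∀ y : integralClosure R K, ∃ a : R,
      y - algebraMap R (integralClosure R K) a ∈ maximalIdeal (integralClosure R K))
    (hkinf : Infinite (ResidueField R))
    (I : Ideal R) (hI0 : I ≠ ⊥) (hIrad : I.radical = maximalIdeal R)
    (hInp : ¬ I.IsPrincipal)
    (x : R) (hxI : x ∈ I)
    (ν : ℕ) (hν : IsLeast {n : ℕ | ∀ k ≥ n, I ^ (k + 1) = Ideal.span {x} * I ^ k} ν)
    (ω : Submodule R K) (hω1 : 1 ≤ ω) (hω2 : ω < ((integralClosure R K).toSubmodule))
    (hωω : ω / ω = 1)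
    (hωdual : ∀ J : Submodule R K, J ≠ ⊥ → J.FG → ω / (ω / J) = J) :
    ((ω ≤ (blowup R K I)) ↔ ω * (blowup R K I) = (blowup R K I)) ∧
    ((ω ≤ (blowup R K I)) ↔ ω / (blowup R K I) = (1 : Submodule R K) / (blowup R K I)) ∧
    ((ω ≤ (blowup R K I)) ↔ ∀ m ≥ ν, (idl R K I) ^ m = ((idl R K I) ^ m * ω) ⊓ 1) ∧
    ((ω ≤ (blowup R K I)) ↔ ∀ m ≥ ν, ω * (idl R K I) ^ m = (idl R K I) ^ m) ∧
    ((ω ≤ (blowup R K I)) ↔ ∃ m : ℕ, 0 < m ∧ ω * (idl R K I) ^ m = (idl R K I) ^ m) :=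
  stmt_7_general R K I hI0 hIrad x hxI ν hν ω hω1 hω2 hωω hωdual
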